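/- Let ρ and σ be faithful states of M, ω_N a faithful state of N, and set ω := R_ρ(ω_N) = ρ^{1/2} ρ_N^{−1/2} ω_N ρ_N^{−1/2} ρ^{1/2}, which is a faithful state of M. Then for all a, b ∈ N: tr( (a ρ_N^{−1/2} ρ^{1/2})* · σ · (b ρ_N^{−1/2} ρ^{1/2}) · ω⁻¹ ) = tr( a* σ_N b ω_N⁻¹ ). Equivalently, V_ρ* ∘ Δ_M(σ, ω) ∘ V_ρ = Δ_N(σ_N, ω_N), where V_ρ : N → M is the Hilbert–Schmidt isometry y ↦ y ρ_N^{−1/2} ρ^{1/2}, Δ_M(σ,ω)(x) := σ x ω⁻¹, and Δ_N(σ_N,ω_N)(y) := σ_N y ω_N⁻¹. -/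

import Mathlib

open scoped ComplexOrder
open MeasureTheory Matrix

namespace QFDiv

/-- `Mat n` is the matrix algebra `Mₙ(ℂ)`. -/
abbrev Mat (n : ℕ) := Matrix (Fin n) (Fin n) ℂ

/-- Hilbert–Schmidt inner product `⟨x, y⟩ = tr(x* y)`. -/
noncomputable def hsInner {n : ℕ} (x y : Mat n) : ℂ := (xᴴ * y).trace

/-- Hilbert–Schmidt norm `‖x‖₂ = tr(x* x)^{1/2}`. -/
noncomputable def hsNorm {n : ℕ} (x : Mat n) : ℝ := Real.sqrt ((xᴴ * x).trace.re)

/-- Trace norm `‖x‖₁ = tr((x* x)^{1/2})`. -/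
noncomputable def traceNorm {n : ℕ} (x : Mat n) : ℝ :=
  (((Matrix.posSemidef_conjTranspose_mul_self x).1.eigenvectorUnitary : Mat n) *
    Matrix.diagonal (fun i => ((Real.sqrt ((Matrix.posSemidef_conjTranspose_mul_self x).1.eigenvalues i) : ℝ) : ℂ)) *
    (star (Matrix.posSemidef_conjTranspose_mul_self x).1.eigenvectorUnitary : Mat n)).trace.re

/-- Operator norm `‖x‖_∞` (as an operator on the Euclidean space `ℂⁿ`). -/
noncomputable def opNorm {n : ℕ} (x : Mat n) : ℝ :=
  ‖Matrix.toEuclideanCLM (𝕜 := ℂ) x‖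

/-- Complex matrix power `A^z := exp(z · log A)` for Hermitian (in particular positive
definite) `A`, defined by the spectral functional calculus; junk value `0` otherwise. -/
noncomputable def mpow {n : ℕ} (A : Mat n) (z : ℂ) : Mat n :=
  if h : A.IsHermitian then
    (h.eigenvectorUnitary : Mat n) *
      Matrix.diagonal (fun i => (h.eigenvalues i : ℂ) ^ z) *
      star (h.eigenvectorUnitary : Mat n)
  else 0

/-- Matrix logarithm via the spectral functional calculus. -/
noncomputable def mlog {n : ℕ} (A : Mat n) : Mat n :=
  if h : A.IsHermitian then
    (h.eigenvectorUnitary : Mat n) *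
      Matrix.diagonal (fun i => (Real.log (h.eigenvalues i) : ℂ)) *
      star (h.eigenvectorUnitary : Mat n)
  else 0

/-- `f(Δ(σ,ω))(x)`, where `Δ(σ,ω) : y ↦ σ y ω⁻¹` is the relative modular operator on the
Hilbert–Schmidt space and `f(Δ(σ,ω))` is its functional calculus:  writing `σ = U diag(s) U*`
and `ω = V diag(w) V*`, the operator `Δ(σ,ω)` has orthonormal eigenvectors `U Eᵢⱼ V*` with
eigenvalues `sᵢ/wⱼ`, so `f(Δ(σ,ω))(x) = U (f(sᵢ/wⱼ) ⊙ (U* x V)) V*`. -/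
noncomputable def modApply {n : ℕ} (f : ℝ → ℝ) (σ ω : Mat n) (x : Mat n) : Mat n :=
  if hσ : σ.IsHermitian then
    if hω : ω.IsHermitian then
      (hσ.eigenvectorUnitary : Mat n) *
        Matrix.of (fun i j =>
          (f (hσ.eigenvalues i / hω.eigenvalues j) : ℂ) *
            ((star (hσ.eigenvectorUnitary : Mat n) * x * (hω.eigenvectorUnitary : Mat n)) i j)) *
        star (hω.eigenvectorUnitary : Mat n)
    else 0
  else 0

/-- Standard `f`-divergence `Q_f(ρ‖σ) = ⟨ρ^{1/2}, f(Δ(σ,ρ))(ρ^{1/2})⟩`. -/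
noncomputable def Qf {n : ℕ} (f : ℝ → ℝ) (ρ σ : Mat n) : ℝ :=
  (hsInner (mpow ρ (1/2)) (modApply f σ ρ (mpow ρ (1/2)))).re

/-- Optimized `f`-divergence `Q̃_f(ρ‖σ) = sup_ω ⟨ρ^{1/2}, f(Δ(σ,ω))(ρ^{1/2})⟩`, where the
supremum runs over all faithful states `ω` of `Mₙ(ℂ)`. -/
noncomputable def Qopt {n : ℕ} (f : ℝ → ℝ) (ρ σ : Mat n) : ℝ :=
  ⨆ ω : {ω : Mat n // ω.PosDef ∧ ω.trace = 1},
    (hsInner (mpow ρ (1/2)) (modApply f σ ω.1 (mpow ρ (1/2)))).re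

/-- Optimized `f`-divergence on the subalgebra `N`: the supremum runs over the faithful
states `ω` of `N`. -/
noncomputable def QoptN {n : ℕ} (f : ℝ → ℝ) (N : StarSubalgebra ℂ (Mat n)) (ρ σ : Mat n) : ℝ :=
  ⨆ ω : {ω : Mat n // ω ∈ N ∧ ω.PosDef ∧ ω.trace = 1},
    (hsInner (mpow ρ (1/2)) (modApply f σ ω.1 (mpow ρ (1/2)))).re

/-- Umegaki relative entropy `D(ρ‖σ) = tr(ρ (log ρ − log σ))`. -/
noncomputable def relEnt {n : ℕ} (ρ σ : Mat n) : ℝ := ((ρ * (mlog ρ - mlog σ)).trace).re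

/-- `Q_{x²}(ρ‖σ) = tr(ρ⁻¹ σ²)`. -/
noncomputable def Qsq {n : ℕ} (ρ σ : Mat n) : ℝ := ((ρ⁻¹ * (σ * σ)).trace).re

/-- `Q_{x⁻¹}(ρ‖σ) = tr(ρ² σ⁻¹)`. -/
noncomputable def Qxinv {n : ℕ} (ρ σ : Mat n) : ℝ := ((ρ * ρ * σ⁻¹).trace).re

/-- Petz–Rényi relative quasi-entropy `Q_s(ρ‖σ) = tr(ρ^{1−s} σ^s)`. -/
noncomputable def Qs {n : ℕ} (s : ℝ) (ρ σ : Mat n) : ℝ :=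
  ((mpow ρ (1 - (s : ℂ)) * mpow σ (s : ℂ)).trace).re

/-- Petz–Rényi relative entropy `D_α(ρ‖σ) = (α−1)⁻¹ log tr(ρ^α σ^{1−α})`. -/
noncomputable def petzRenyi {n : ℕ} (α : ℝ) (ρ σ : Mat n) : ℝ :=
  (α - 1)⁻¹ * Real.log (((mpow ρ (α : ℂ) * mpow σ (1 - (α : ℂ))).trace).re)

/-- Sandwiched Rényi relative quasi-entropy
`Q̃_α(ρ‖σ) = (tr[(ρ^{1/2} σ^{−1/α'} ρ^{1/2})^α])^{1/α}` with `α' = α/(α−1)`,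
so that `−1/α' = (1−α)/α`. -/
noncomputable def sandQ {n : ℕ} (α : ℝ) (ρ σ : Mat n) : ℝ :=
  (((mpow (mpow ρ (1/2) * mpow σ (((1 - α)/α : ℝ) : ℂ) * mpow ρ (1/2)) (α : ℂ)).trace).re)
    ^ (1/α)

/-- Sandwiched Rényi relative entropy `D̃_α(ρ‖σ) = α' log Q̃_α(ρ‖σ)`. -/
noncomputable def sandD {n : ℕ} (α : ℝ) (ρ σ : Mat n) : ℝ :=
  (α/(α-1)) * Real.log (sandQ α ρ σ)

/-- Rotated Petz recovery map
`R_ρ^t(x) = ρ^{1/2−it} ρ_N^{−1/2+it} x ρ_N^{−1/2−it} ρ^{1/2+it}` (here `ρN` is the matrix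
`ρ_N = E(ρ)`). -/
noncomputable def rotPetz {n : ℕ} (ρ ρN : Mat n) (t : ℝ) (x : Mat n) : Mat n :=
  mpow ρ (1/2 - Complex.I * t) * mpow ρN (-(1/2) + Complex.I * t) * x *
    mpow ρN (-(1/2) - Complex.I * t) * mpow ρ (1/2 + Complex.I * t)

/-- The probability measure `dβ(t) = (π/2)(cosh(πt)+1)⁻¹ dt` on `ℝ`. -/
noncomputable def betaMeasure : Measure ℝ :=
  volume.withDensity fun t => ENNReal.ofReal (Real.pi / 2 * (Real.cosh (Real.pi * t) + 1)⁻¹)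

/-- Universal Petz recovery map `R_ρ^u(x) = ∫_ℝ R_ρ^{t/2}(x) dβ(t)` (Bochner integral,
computed entrywise). -/
noncomputable def univPetz {n : ℕ} (ρ ρN : Mat n) (x : Mat n) : Mat n :=
  Matrix.of fun i j => ∫ t : ℝ, rotPetz ρ ρN (t/2) x i j ∂betaMeasure

/-- `E` is the trace-preserving conditional expectation onto the subalgebra `N`, i.e. the
orthogonal projection of `Mₙ(ℂ)` onto `N` for the Hilbert–Schmidt inner product. -/
def IsCondExp {n : ℕ} (N : StarSubalgebra ℂ (Mat n)) (E : Mat n →ₗ[ℂ] Mat n) : Prop :=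
  (∀ x, E x ∈ N) ∧ (∀ x ∈ N, E x = x) ∧ (∀ x y, hsInner (E x) y = hsInner x (E y))

/-- `f` admits the integral representation
`f(x) = a + b x + ∫₀^∞ (1/(λ+x) − λ/(λ²+1)) dν(λ)` for `x > 0`, with `b ≥ 0` and
`∫ λ/(λ²+1) dν(λ) < ∞`. -/
def HasIntRep (f : ℝ → ℝ) (a b : ℝ) (ν : Measure ℝ) : Prop :=
  0 ≤ b ∧
  (∫⁻ l in Set.Ioi (0:ℝ), ENNReal.ofReal (l / (l^2 + 1)) ∂ν) < ⊤ ∧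
  ∀ x : ℝ, 0 < x →
    IntegrableOn (fun l => 1/(l + x) - l/(l^2 + 1)) (Set.Ioi 0) ν ∧
    f x = a + b*x + ∫ l in Set.Ioi (0:ℝ), (1/(l + x) - l/(l^2 + 1)) ∂ν

end QFDiv

/-!
Put `T := ρ^{1/2} ρ_N^{-1/2}`. Then `ω = T ω_N Tᴴ` and `V_ρ y = y Tᴴ`, so
`(a Tᴴ)ᴴ σ (b Tᴴ) ω⁻¹ = T (aᴴ σ b ω_N⁻¹) T⁻¹` has the same trace as `aᴴ σ b ω_N⁻¹`.
As `b ω_N⁻¹ aᴴ ∈ N`, the trace property `tr(c x) = tr(c E(x))` (`c ∈ N`) of the conditional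
expectation then replaces `σ` by `σ_N`; it also gives
`tr ω = tr(ω_N ρ_N^{-1/2} ρ_N ρ_N^{-1/2}) = 1`.
Everything rests on the invertibility of `ρ_N`: `E` preserves positive definiteness, because
every nonzero spectral projection `p ∈ N` of `E ρ` has `tr(p E ρ) = tr(p ρ p) > 0`.
-/

instance StarSubalgebra.isClosed_of_finiteDimensional {𝕜 A : Type*} [RCLike 𝕜] [Ring A]
    [StarRing A] [Algebra 𝕜 A] [StarModule 𝕜 A] [TopologicalSpace A] [IsTopologicalAddGroup A]
    [ContinuousSMul 𝕜 A] [T2Space A] [FiniteDimensional 𝕜 A] (N : StarSubalgebra 𝕜 A) :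
    IsClosed (N : Set A) :=
  N.toSubalgebra.toSubmodule.closed_of_finiteDimensional

namespace Matrix

variable {m 𝕜 : Type*} [Fintype m] [RCLike 𝕜]

lemma trace_conjTranspose_mul_self_pos {l : Type*} [Fintype l] {X : Matrix l m 𝕜}
    (hX : X ≠ 0) : 0 < (Xᴴ * X).trace :=
  (posSemidef_conjTranspose_mul_self X).trace_nonneg.lt_of_ne'
    (mt trace_conjTranspose_mul_self_eq_zero_iff.mp hX)

variable [DecidableEq m]

lemma trace_conjTranspose_mul_mul_inv_of_isUnit {R : Type*} [CommRing R] [StarRing R]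
    {T : Matrix m m R} (hT : IsUnit T) (a b s w : Matrix m m R) :
    ((a * Tᴴ)ᴴ * s * (b * Tᴴ) * (T * w * Tᴴ)⁻¹).trace = (aᴴ * s * b * w⁻¹).trace := by
  have hTd : IsUnit T.det := (isUnit_iff_isUnit_det T).mp hT
  have hTHd : IsUnit Tᴴ.det := (isUnit_iff_isUnit_det _).mp ((isUnit_conjTranspose T).mpr hT)
  rw [Matrix.mul_inv_rev, Matrix.mul_inv_rev, conjTranspose_mul, conjTranspose_conjTranspose]
  calc (T * aᴴ * s * (b * Tᴴ) * (Tᴴ⁻¹ * (w⁻¹ * T⁻¹))).trace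
      = (T * (aᴴ * s * b * w⁻¹) * T⁻¹).trace := by
        simp only [Matrix.mul_assoc, mul_nonsing_inv_cancel_left _ _ hTHd]
    _ = (aᴴ * s * b * w⁻¹).trace := by
        rw [trace_mul_cycle, nonsing_inv_mul _ hTd, Matrix.one_mul]

lemma eq_of_forall_trace_mul_eq {N : StarSubalgebra 𝕜 (Matrix m m 𝕜)} {x y : Matrix m m 𝕜}
    (hx : x ∈ N) (hy : y ∈ N)
    (h : ∀ c ∈ N, (c * x).trace = (c * y).trace) : x = y := by
  have hd : (x - y)ᴴ ∈ N := star_mem (sub_mem hx hy)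
  rw [← sub_eq_zero, ← trace_conjTranspose_mul_self_eq_zero_iff, Matrix.mul_sub, trace_sub,
    h _ hd, sub_self]

lemma continuousOn_spectrum (f : ℝ → ℝ) (A : Matrix m m 𝕜) :
    ContinuousOn f (spectrum ℝ A) :=
  A.finite_real_spectrum.continuousOn f

lemma PosDef.pos_of_mem_spectrum {A : Matrix m m 𝕜} (hA : A.PosDef) {x : ℝ}
    (hx : x ∈ spectrum ℝ A) : 0 < x := by
  obtain ⟨i, rfl⟩ := hA.isHermitian.spectrum_real_eq_range_eigenvalues ▸ hx
  exact hA.eigenvalues_pos i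

lemma PosDef.cfc_rpow_mul_cfc_rpow {A : Matrix m m 𝕜} (hA : A.PosDef) (s t : ℝ) :
    cfc (fun x : ℝ => x ^ s) A * cfc (fun x : ℝ => x ^ t) A =
      cfc (fun x : ℝ => x ^ (s + t)) A := by
  rw [← cfc_mul _ _ A (continuousOn_spectrum _ A) (continuousOn_spectrum _ A)]
  exact cfc_congr fun x hx => (Real.rpow_add (hA.pos_of_mem_spectrum hx) s t).symm

lemma IsHermitian.cfc_rpow_one {A : Matrix m m 𝕜} (hA : A.IsHermitian) :
    cfc (fun x : ℝ => x ^ (1 : ℝ)) A = A := by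
  simp only [Real.rpow_one]
  exact cfc_id' ℝ A hA.isSelfAdjoint

lemma IsHermitian.cfc_rpow_zero {A : Matrix m m 𝕜} (hA : A.IsHermitian) :
    cfc (fun x : ℝ => x ^ (0 : ℝ)) A = 1 := by
  simp only [Real.rpow_zero]
  exact cfc_const_one ℝ A hA.isSelfAdjoint

lemma PosDef.trace_conjTranspose_mul_mul_pos {A X : Matrix m m 𝕜} (hA : A.PosDef)
    (hX : X ≠ 0) : 0 < (Xᴴ * A * X).trace := by
  set r := cfc (fun x : ℝ => x ^ (1 / 2 : ℝ)) A
  have hr : r * r = A := by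
    rw [hA.cfc_rpow_mul_cfc_rpow, add_halves, hA.isHermitian.cfc_rpow_one]
  have hru : IsUnit r := isUnit_of_mul_isUnit_left (hr ▸ hA.isUnit : IsUnit (r * r))
  have hrX : r * X ≠ 0 := fun h => hX (hru.mul_right_eq_zero.mp h)
  have hrH : rᴴ = r := (cfc_predicate _ A : IsSelfAdjoint r)
  convert trace_conjTranspose_mul_self_pos hrX using 2
  rw [conjTranspose_mul, hrH, ← hr]
  simp only [Matrix.mul_assoc]

lemma IsHermitian.nonsing_inv_mem {N : StarSubalgebra 𝕜 (Matrix m m 𝕜)} {a : Matrix m m 𝕜}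
    (ha : a.IsHermitian) (haN : a ∈ N) : a⁻¹ ∈ N := by
  by_cases hu : IsUnit a
  · rw [nonsing_inv_eq_ringInverse, ← cfc_ringInverse_id (R := ℝ) a hu ha.isSelfAdjoint]
    exact cfc_mem _ haN
  · rw [nonsing_inv_apply_not_isUnit a (mt (isUnit_iff_isUnit_det a).mpr hu)]
    exact zero_mem N

lemma IsHermitian.posDef_of_forall_isStarProjection {N : StarSubalgebra 𝕜 (Matrix m m 𝕜)}
    {a : Matrix m m 𝕜} (ha : a.IsHermitian) (haN : a ∈ N)
    (h : ∀ p ∈ N, IsStarProjection p → p ≠ 0 → 0 < (p * a).trace) : a.PosDef := by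
  rw [ha.posDef_iff_eigenvalues_pos]
  intro i
  set μ := ha.eigenvalues i
  have hμ : μ ∈ spectrum ℝ a := ha.spectrum_real_eq_range_eigenvalues ▸ ⟨i, rfl⟩
  set g : ℝ → ℝ := fun x => if x = μ then 1 else 0
  set p := cfc g a
  have hp : IsStarProjection p := by
    refine ⟨?_, cfc_predicate g a⟩
    rw [IsIdempotentElem, ← cfc_mul g g a (continuousOn_spectrum _ a) (continuousOn_spectrum _ a)]
    exact cfc_congr fun x _ => by by_cases hx : x = μ <;> simp [g, hx]
  have hp0 : p ≠ 0 := fun h0 => by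
    simpa [g] using eqOn_of_cfc_eq_cfc (h0.trans (cfc_zero ℝ a).symm) (continuousOn_spectrum _ a)
      (continuousOn_spectrum _ a) ha.isSelfAdjoint hμ
  have hpa : p * a = (μ : 𝕜) • p := by
    conv_lhs => rw [← cfc_id' ℝ a ha.isSelfAdjoint]
    rw [← cfc_mul g _ a (continuousOn_spectrum _ a) (continuousOn_spectrum _ a),
      ← RCLike.real_smul_eq_coe_smul, ← cfc_const_mul _ _ _ (continuousOn_spectrum _ a)]
    exact cfc_congr fun x _ => by by_cases hx : x = μ <;> simp [g, hx]
  have htr : 0 < p.trace := by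
    have hpp : pᴴ * p = p := by
      rw [← star_eq_conjTranspose, hp.isSelfAdjoint.star_eq, hp.isIdempotentElem.eq]
    simpa only [hpp] using trace_conjTranspose_mul_self_pos hp0
  have hμp := h p (cfc_mem g haN) hp hp0
  rw [hpa, trace_smul, smul_eq_mul] at hμp
  exact RCLike.ofReal_pos.mp ((pos_iff_pos_of_mul_pos hμp).mpr htr)

end Matrix

namespace QFDiv

variable {n : ℕ}

lemma mpow_ofReal_eq_cfc {A : Mat n} (hA : A.PosSemidef) (t : ℝ) :
    mpow A t = cfc (fun x : ℝ => x ^ t) A := by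
  rw [mpow, dif_pos hA.isHermitian, hA.isHermitian.cfc_eq, IsHermitian.cfc,
    Unitary.conjStarAlgAut_apply]
  congr 3
  ext i
  exact (Complex.ofReal_cpow (hA.eigenvalues_nonneg i) t).symm

lemma isHermitian_mpow_ofReal {A : Mat n} (hA : A.PosSemidef) (t : ℝ) :
    (mpow A t).IsHermitian := by
  rw [mpow_ofReal_eq_cfc hA]
  exact cfc_predicate _ A

lemma mpow_ofReal_mem {N : StarSubalgebra ℂ (Mat n)} {A : Mat n} (hA : A.PosSemidef)
    (hAN : A ∈ N) (t : ℝ) : mpow A t ∈ N := by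
  rw [mpow_ofReal_eq_cfc hA]
  exact cfc_mem _ hAN

lemma mpow_half_mul_self {A : Mat n} (hA : A.PosDef) : mpow A (1 / 2) * mpow A (1 / 2) = A := by
  have h := mpow_ofReal_eq_cfc hA.posSemidef (1 / 2)
  push_cast at h
  rw [h, hA.cfc_rpow_mul_cfc_rpow, add_halves, hA.isHermitian.cfc_rpow_one]

lemma mpow_neg_half_mul_mul_self {A : Mat n} (hA : A.PosDef) :
    mpow A (-(1 / 2)) * A * mpow A (-(1 / 2)) = 1 := by
  have h := mpow_ofReal_eq_cfc hA.posSemidef (-(1 / 2))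
  push_cast at h
  rw [h]
  nth_rw 2 [← hA.isHermitian.cfc_rpow_one]
  rw [hA.cfc_rpow_mul_cfc_rpow, hA.cfc_rpow_mul_cfc_rpow, ← hA.isHermitian.cfc_rpow_zero]
  norm_num

/-- `R_ρ(x) = T x Tᴴ` and `V_ρ y = y Tᴴ` for `T = petzFactor ρ ρ_N`. -/
noncomputable def petzFactor (ρ ρN : Mat n) : Mat n := mpow ρ (1 / 2) * mpow ρN (-(1 / 2))

lemma conjTranspose_petzFactor {ρ ρN : Mat n} (hρ : ρ.PosSemidef) (hρN : ρN.PosSemidef) :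
    (petzFactor ρ ρN)ᴴ = mpow ρN (-(1 / 2)) * mpow ρ (1 / 2) := by
  have hr : (mpow ρ (1 / 2)).IsHermitian := by simpa using isHermitian_mpow_ofReal hρ (1 / 2)
  have hq : (mpow ρN (-(1 / 2))).IsHermitian := by
    simpa using isHermitian_mpow_ofReal hρN (-(1 / 2))
  rw [petzFactor, conjTranspose_mul, hr.eq, hq.eq]

lemma isUnit_petzFactor {ρ ρN : Mat n} (hρ : ρ.PosDef) (hρN : ρN.PosDef) :
    IsUnit (petzFactor ρ ρN) := by
  have hr : IsUnit (mpow ρ (1 / 2) * mpow ρ (1 / 2)) :=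
    (mpow_half_mul_self hρ).symm ▸ hρ.isUnit
  have hq : IsUnit (mpow ρN (-(1 / 2)) * (ρN * mpow ρN (-(1 / 2)))) := by
    rw [← Matrix.mul_assoc, mpow_neg_half_mul_mul_self hρN]
    exact isUnit_one
  exact (isUnit_of_mul_isUnit_left hr).mul (isUnit_of_mul_isUnit_left hq)

variable {N : StarSubalgebra ℂ (Mat n)} {E : Mat n →ₗ[ℂ] Mat n}

lemma IsCondExp.trace_mul_apply (hE : IsCondExp N E) {c : Mat n} (hc : c ∈ N) (x : Mat n) :
    (c * E x).trace = (c * x).trace := by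
  have h := hE.2.2 cᴴ x
  rw [hE.2.1 cᴴ (star_mem hc)] at h
  simpa only [hsInner, conjTranspose_conjTranspose] using h.symm

lemma IsCondExp.trace_mul_apply_mul (hE : IsCondExp N E) {c d : Mat n} (hc : c ∈ N) (hd : d ∈ N)
    (x : Mat n) : (c * E x * d).trace = (c * x * d).trace := by
  rw [trace_mul_cycle, hE.trace_mul_apply (mul_mem hd hc), ← trace_mul_cycle]

lemma IsCondExp.apply_conjTranspose (hE : IsCondExp N E) (x : Mat n) : E xᴴ = (E x)ᴴ := by
  refine eq_of_forall_trace_mul_eq (hE.1 _) (star_mem (hE.1 x)) fun c hc => ?_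
  rw [hE.trace_mul_apply hc, ← conjTranspose_conjTranspose c, ← conjTranspose_mul,
    ← conjTranspose_mul, trace_conjTranspose, trace_conjTranspose, trace_mul_comm (E x),
    hE.trace_mul_apply (c := cᴴ) (star_mem hc), trace_mul_comm]

lemma IsCondExp.isHermitian_apply (hE : IsCondExp N E) {x : Mat n} (hx : x.IsHermitian) :
    (E x).IsHermitian := by
  rw [IsHermitian, ← hE.apply_conjTranspose, hx.eq]

lemma IsCondExp.posDef_apply (hE : IsCondExp N E) {x : Mat n} (hx : x.PosDef) : (E x).PosDef := by
  refine (hE.isHermitian_apply hx.isHermitian).posDef_of_forall_isStarProjection (hE.1 x)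
    fun p hpN hp hp0 => ?_
  have hpH : pᴴ = p := hp.isSelfAdjoint
  rw [hE.trace_mul_apply hpN, ← hp.isIdempotentElem.eq, ← trace_mul_cycle]
  nth_rw 1 [← hpH]
  exact hx.trace_conjTranspose_mul_mul_pos hp0

lemma IsCondExp.trace_mul_conjTranspose_petzFactor_mul_self (hE : IsCondExp N E) {ρ c : Mat n}
    (hρ : ρ.PosDef) (hc : c ∈ N) :
    (c * ((petzFactor ρ (E ρ))ᴴ * petzFactor ρ (E ρ))).trace = c.trace := by
  have hEρ : (E ρ).PosDef := hE.posDef_apply hρ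
  have hqN : mpow (E ρ) (-(1 / 2)) ∈ N := by
    simpa using mpow_ofReal_mem hEρ.posSemidef (hE.1 ρ) (-(1 / 2))
  rw [conjTranspose_petzFactor hρ.posSemidef hEρ.posSemidef, petzFactor]
  set q := mpow (E ρ) (-(1 / 2))
  set r := mpow ρ (1 / 2)
  calc (c * (q * r * (r * q))).trace = (q * c * q * (r * r)).trace := by
        rw [show c * (q * r * (r * q)) = c * q * r * r * q by simp only [Matrix.mul_assoc],
          trace_mul_comm]
        simp only [Matrix.mul_assoc]
    _ = (c * (q * E ρ * q)).trace := by
        rw [mpow_half_mul_self hρ, ← hE.trace_mul_apply (mul_mem (mul_mem hqN hc) hqN),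
          show q * c * q * E ρ = q * (c * q * E ρ) by simp only [Matrix.mul_assoc],
          trace_mul_comm]
        simp only [Matrix.mul_assoc]
    _ = c.trace := by rw [mpow_neg_half_mul_mul_self hEρ, Matrix.mul_one]

theorem stmt13_general (n : ℕ) (N : StarSubalgebra ℂ (Mat n)) (E : Mat n →ₗ[ℂ] Mat n)
    (hE : IsCondExp N E)
    (ρ σ : Mat n) (hρ : ρ.PosDef)
    (ωN : Mat n) (hωN : ωN ∈ N) (hωN' : ωN.PosDef) (hωN1 : ωN.trace = 1)
    (ω : Mat n) (hω : ω = mpow ρ (1/2) * mpow (E ρ) (-(1/2)) * ωN * mpow (E ρ) (-(1/2)) * mpow ρ (1/2)) :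
    (ω.PosDef ∧ ω.trace = 1) ∧
    ∀ a b : Mat n, a ∈ N → b ∈ N →
      ((a * mpow (E ρ) (-(1/2)) * mpow ρ (1/2))ᴴ * σ *
          (b * mpow (E ρ) (-(1/2)) * mpow ρ (1/2)) * ω⁻¹).trace =
        (aᴴ * (E σ) * b * ωN⁻¹).trace := by
  have hEρ : (E ρ).PosDef := hE.posDef_apply hρ
  have hT := isUnit_petzFactor hρ hEρ
  have hTH := conjTranspose_petzFactor hρ.posSemidef hEρ.posSemidef
  set T := petzFactor ρ (E ρ)
  have hω' : ω = T * ωN * Tᴴ := by rw [hω, hTH]; simp only [T, petzFactor, Matrix.mul_assoc]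
  have hV : ∀ a : Mat n, a * mpow (E ρ) (-(1 / 2)) * mpow ρ (1 / 2) = a * Tᴴ := fun a => by
    rw [hTH, Matrix.mul_assoc]
  refine ⟨⟨?_, ?_⟩, fun a b ha hb => ?_⟩
  · rw [hω']
    exact hωN'.mul_mul_conjTranspose_same (vecMul_injective_iff_isUnit.mpr hT)
  · rw [hω', trace_mul_cycle, trace_mul_comm,
      hE.trace_mul_conjTranspose_petzFactor_mul_self hρ hωN, hωN1]
  · have hbω : b * ωN⁻¹ ∈ N := mul_mem hb (hωN'.isHermitian.nonsing_inv_mem hωN)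
    calc _ = (aᴴ * σ * (b * ωN⁻¹)).trace := by
          rw [hV a, hV b, hω', trace_conjTranspose_mul_mul_inv_of_isUnit hT, Matrix.mul_assoc]
      _ = (aᴴ * E σ * b * ωN⁻¹).trace := by
          rw [← hE.trace_mul_apply_mul (c := aᴴ) (star_mem ha) hbω]
          simp only [Matrix.mul_assoc]

/-- Lemma `omega`: intertwining of relative modular operators by the
isometry `V_ρ : y ↦ y ρ_N^{−1/2} ρ^{1/2}`.
Let `ω_N` be a faithful state of `N` and `ω := R_ρ(ω_N) = ρ^{1/2} ρ_N^{−1/2} ω_N ρ_N^{−1/2} ρ^{1/2}`.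
Then `ω` is a faithful state of `M`, and for all `a, b ∈ N`,
`tr((a ρ_N^{−1/2} ρ^{1/2})* σ (b ρ_N^{−1/2} ρ^{1/2}) ω⁻¹) = tr(a* σ_N b ω_N⁻¹)`,
i.e. `V_ρ* ∘ Δ_M(σ,ω) ∘ V_ρ = Δ_N(σ_N,ω_N)`. -/
theorem stmt13 (n : ℕ) (N : StarSubalgebra ℂ (Mat n)) (E : Mat n →ₗ[ℂ] Mat n)
    (hE : IsCondExp N E)
    (ρ σ : Mat n) (hρ : ρ.PosDef) (hρ1 : ρ.trace = 1) (hσ : σ.PosDef) (hσ1 : σ.trace = 1)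
    (ωN : Mat n) (hωN : ωN ∈ N) (hωN' : ωN.PosDef) (hωN1 : ωN.trace = 1)
    (ω : Mat n) (hω : ω = mpow ρ (1/2) * mpow (E ρ) (-(1/2)) * ωN * mpow (E ρ) (-(1/2)) * mpow ρ (1/2)) :
    (ω.PosDef ∧ ω.trace = 1) ∧
    ∀ a b : Mat n, a ∈ N → b ∈ N →
      ((a * mpow (E ρ) (-(1/2)) * mpow ρ (1/2))ᴴ * σ *
          (b * mpow (E ρ) (-(1/2)) * mpow ρ (1/2)) * ω⁻¹).trace =
        (aᴴ * (E σ) * b * ωN⁻¹).trace :=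
  stmt13_general n N E hE ρ σ hρ ωN hωN hωN' hωN1 ω hω

end QFDiv
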